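/- Let ρ > 0 and N ≥ 2. Then P(H_N = 1) = 1/(1 + ρ(N−1)), and consequently Var(H_N) ≥ (E(H_N) − 1)²/(1 + ρ(N−1)). In particular, for ρ ≥ 1 and all sufficiently large N, Var(H_N) ≥ (N−5)²/(1 + ρ(N−1)). -/

import Mathlib

open Finset Filter Real Topology

/-- `r_{ρ,n}(i) = ρ^{-i} * C(n-1, i)^{-1}`. -/
noncomputable def rfun (ρ : ℝ) (n i : ℕ) : ℝ := (ρ ^ i * (Nat.choose (n - 1) i : ℝ))⁻¹

/-- `P(H_N ≥ k)` for `k = 1,…,N`, and `0` for `k > N`. -/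
noncomputable def tailP (ρ : ℝ) (N k : ℕ) : ℝ :=
  if k ≤ N then (∑ i ∈ Finset.range k, rfun ρ N i)⁻¹ else 0

/-- `P(H_N = k) = P(H_N ≥ k) − P(H_N ≥ k+1)`. -/
noncomputable def pmfP (ρ : ℝ) (N k : ℕ) : ℝ := tailP ρ N k - tailP ρ N (k + 1)

/-- `E(H_N) = ∑_{k=1}^N P(H_N ≥ k)`. -/
noncomputable def EH (ρ : ℝ) (N : ℕ) : ℝ := ∑ k ∈ Finset.Icc 1 N, tailP ρ N k

/-- `Var(H_N) = ∑_{k=1}^N (k − E(H_N))² P(H_N = k)`. -/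
noncomputable def VarH (ρ : ℝ) (N : ℕ) : ℝ :=
  ∑ k ∈ Finset.Icc 1 N, ((k : ℝ) - EH ρ N) ^ 2 * pmfP ρ N k

/-- `P(H_N ≤ t)` for a real threshold `t`. -/
noncomputable def cdfP (ρ : ℝ) (N : ℕ) (t : ℝ) : ℝ :=
  ∑ k ∈ (Finset.Icc 1 N).filter (fun k : ℕ => (k : ℝ) ≤ t), pmfP ρ N k

/-
`P(H_N = 1)` is the explicit difference `1 - (1 + 1/(ρ(N-1)))⁻¹`, and since every term of the
variance is nonnegative, `Var(H_N)` dominates its `k = 1` term `(1 - E(H_N))² P(H_N = 1)`.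

For the asymptotic bound it remains to show `E(H_N) ≥ N - 4` when `ρ ≥ 1`. Writing
`S_k = ∑_{i<k} ρ^{-i} C(N-1,i)^{-1}`, so that `P(H_N ≥ k) = 1/S_k`, the tangent-line bound
`1/x ≥ 2 - x` gives `E(H_N) ≥ 2N - ∑_k S_k = N - ∑_{i=1}^{N-1} (N-i) ρ^{-i} C(N-1,i)^{-1}`.
In the last sum the terms `i = 1` and `i = N - 1` are at most `1`, and each of the remaining
`N - 3` terms is at most `2/(N-1)` (for `i ≤ N - 3` because `C(N-1,i) ≥ C(N-1,2)`), so the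
sum is less than `4`.
-/

lemma two_sub_le_inv {x : ℝ} (hx : 0 < x) : 2 - x ≤ x⁻¹ := by
  have hsq : x⁻¹ - (2 - x) = (x - 1) ^ 2 / x := by field_simp; ring
  linarith [show 0 ≤ (x - 1) ^ 2 / x by positivity]

lemma sum_Icc_sum_range_eq {R : Type*} [CommRing R] (f : ℕ → R) (N : ℕ) :
    ∑ k ∈ Icc 1 N, ∑ i ∈ range k, f i = ∑ i ∈ range N, ((N : R) - i) * f i := by
  induction N with
  | zero => simp
  | succ n ih =>
    rw [sum_Icc_succ_top (by omega), ih, sum_range_succ, sum_range_succ, Nat.cast_succ]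
    have hshift : ∀ i ∈ range n, ((n : R) + 1 - i) * f i = ((n : R) - i) * f i + f i :=
      fun i _ ↦ by ring
    rw [sum_congr rfl hshift, sum_add_distrib]
    ring

lemma Nat.choose_two_le_choose {M i : ℕ} (h2 : 2 ≤ i) (hi : i + 2 ≤ M) :
    M.choose 2 ≤ M.choose i := by
  have hpos : 0 < i.choose 2 := Nat.choose_pos h2
  refine Nat.le_of_mul_le_mul_right ?_ hpos
  rw [Nat.choose_mul h2]
  refine Nat.mul_le_mul_left _ ?_
  calc i.choose 2 = i.choose (i - 2) := (Nat.choose_symm h2).symm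
    _ ≤ (M - 2).choose (i - 2) := Nat.choose_le_choose _ (by omega)

lemma succ_sub_div_choose_le {M i : ℕ} (h2 : 2 ≤ i) (hi : i < M) :
    ((M : ℝ) + 1 - i) / M.choose i ≤ 2 / M := by
  obtain hlt | rfl : i + 2 ≤ M ∨ M = i + 1 := by omega
  · have hM : (2 : ℝ) ≤ M := by exact_mod_cast (by omega : 2 ≤ M)
    have hchoose : (M.choose 2 : ℝ) ≤ M.choose i := by
      exact_mod_cast Nat.choose_two_le_choose h2 hlt
    have hi' : (2 : ℝ) ≤ i := by exact_mod_cast h2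
    calc ((M : ℝ) + 1 - i) / M.choose i ≤ ((M : ℝ) - 1) / M.choose 2 :=
          div_le_div₀ (by linarith) (by linarith)
            (by exact_mod_cast Nat.choose_pos (by omega)) hchoose
      _ = 2 / M := by
          have hM1 : (M : ℝ) - 1 ≠ 0 := by linarith
          rw [Nat.cast_choose_two]
          field_simp
  · rw [Nat.choose_succ_self_right]
    push_cast
    rw [show (i : ℝ) + 1 + 1 - i = 2 by ring]

lemma sum_range_succ_sub_div_choose_le (M : ℕ) :
    ∑ i ∈ range (M + 1), ((M : ℝ) + 1 - i) / M.choose i ≤ M + 5 := by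
  rcases Nat.lt_or_ge M 2 with hM | hM
  · interval_cases M <;> norm_num [sum_range_succ]
  obtain ⟨K, rfl⟩ : ∃ K, M = K + 2 := ⟨M - 2, by omega⟩
  have hmiddle : ∑ j ∈ range K, ((↑(K + 2) : ℝ) + 1 - ↑(j + 1 + 1)) / (K + 2).choose (j + 1 + 1)
      ≤ 2 := by
    calc _ ≤ ∑ j ∈ range K, 2 / ((K + 2 : ℕ) : ℝ) :=
          sum_le_sum fun j hj ↦ succ_sub_div_choose_le (by omega) (by simp at hj; omega)
      _ ≤ 2 := by
          rw [sum_const, card_range, nsmul_eq_mul, mul_div_assoc', div_le_iff₀ (by positivity)]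
          push_cast
          linarith
  rw [sum_range_succ, sum_range_succ', sum_range_succ', Nat.choose_self, Nat.choose_zero_right,
    Nat.choose_one_right]
  have hK : (0 : ℝ) < (K + 2 : ℕ) := by positivity
  push_cast at hmiddle hK ⊢
  have hone : ((K : ℝ) + 2 + 1 - 1) / (K + 2) = 1 := by rw [div_eq_one_iff_eq hK.ne']; ring
  linarith

lemma rfun_zero (ρ : ℝ) (n : ℕ) : rfun ρ n 0 = 1 := by simp [rfun]

lemma rfun_nonneg {ρ : ℝ} (hρ : 0 ≤ ρ) (n i : ℕ) : 0 ≤ rfun ρ n i := by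
  unfold rfun; positivity

lemma rfun_le_inv_choose {ρ : ℝ} (hρ : 1 ≤ ρ) (n i : ℕ) :
    rfun ρ n i ≤ ((n - 1).choose i : ℝ)⁻¹ := by
  rcases Nat.eq_zero_or_pos ((n - 1).choose i) with h0 | hpos
  · simp [rfun, h0]
  · exact inv_anti₀ (by exact_mod_cast hpos)
      (le_mul_of_one_le_left (Nat.cast_nonneg _) (one_le_pow₀ hρ))

lemma one_le_sum_rfun {ρ : ℝ} (hρ : 0 ≤ ρ) (n : ℕ) {k : ℕ} (hk : 1 ≤ k) :
    1 ≤ ∑ i ∈ range k, rfun ρ n i := by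
  rw [← rfun_zero ρ n]
  exact single_le_sum (fun i _ ↦ rfun_nonneg hρ n i) (mem_range.2 hk)

lemma tailP_of_le {ρ : ℝ} {N k : ℕ} (hk : k ≤ N) :
    tailP ρ N k = (∑ i ∈ range k, rfun ρ N i)⁻¹ := if_pos hk

lemma pmfP_nonneg {ρ : ℝ} (hρ : 0 ≤ ρ) (N : ℕ) {k : ℕ} (hk : 1 ≤ k) : 0 ≤ pmfP ρ N k := by
  have hS := one_le_sum_rfun hρ N hk
  rw [pmfP, sub_nonneg]
  by_cases hkN : k + 1 ≤ N
  · rw [tailP_of_le hkN, tailP_of_le (by omega), sum_range_succ]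
    exact inv_anti₀ (by linarith) (le_add_of_nonneg_right (rfun_nonneg hρ N k))
  · rw [tailP, if_neg hkN, tailP]
    split_ifs <;> positivity

lemma pmfP_one {ρ : ℝ} (hρ : 0 < ρ) {N : ℕ} (hN : 2 ≤ N) :
    pmfP ρ N 1 = 1 / (1 + ρ * ((N : ℝ) - 1)) := by
  have hN1 : (0 : ℝ) < (N : ℝ) - 1 := by
    have : (2 : ℝ) ≤ N := by exact_mod_cast hN
    linarith
  rw [pmfP, tailP_of_le (by omega), tailP_of_le hN, sum_range_one, sum_range_succ, sum_range_one,
    rfun_zero, rfun, Nat.choose_one_right, Nat.cast_pred (by omega), pow_one]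
  field_simp
  ring

lemma sq_mul_pmfP_one_le_VarH {ρ : ℝ} (hρ : 0 ≤ ρ) {N : ℕ} (hN : 1 ≤ N) :
    (EH ρ N - 1) ^ 2 * pmfP ρ N 1 ≤ VarH ρ N := by
  have hterm := single_le_sum (f := fun k : ℕ ↦ ((k : ℝ) - EH ρ N) ^ 2 * pmfP ρ N k)
    (fun k hk ↦ mul_nonneg (sq_nonneg _) (pmfP_nonneg hρ N (mem_Icc.1 hk).1))
    (mem_Icc.2 ⟨le_rfl, hN⟩)
  simpa [VarH, sub_sq_comm] using hterm

lemma sum_range_sub_mul_rfun_le {ρ : ℝ} (hρ : 1 ≤ ρ) (N : ℕ) :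
    ∑ i ∈ range N, ((N : ℝ) - i) * rfun ρ N i ≤ N + 4 := by
  rcases N with _ | M
  · norm_num
  calc _ ≤ ∑ i ∈ range (M + 1), ((M : ℝ) + 1 - i) / M.choose i := by
        refine sum_le_sum fun i hi ↦ ?_
        have hiM : (i : ℝ) ≤ M := by exact_mod_cast Nat.lt_succ_iff.1 (mem_range.1 hi)
        rw [div_eq_mul_inv, Nat.cast_succ]
        exact mul_le_mul_of_nonneg_left (rfun_le_inv_choose hρ _ i) (by linarith)
    _ ≤ M + 5 := sum_range_succ_sub_div_choose_le M
    _ = ((M + 1 : ℕ) : ℝ) + 4 := by push_cast; ring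

lemma sub_four_le_EH {ρ : ℝ} (hρ : 1 ≤ ρ) (N : ℕ) : (N : ℝ) - 4 ≤ EH ρ N := by
  have htail : ∀ k ∈ Icc 1 N, 2 - ∑ i ∈ range k, rfun ρ N i ≤ tailP ρ N k := fun k hk ↦ by
    rw [tailP_of_le (mem_Icc.1 hk).2]
    exact two_sub_le_inv (by linarith [one_le_sum_rfun (by linarith) N (mem_Icc.1 hk).1])
  have hsum := sum_le_sum htail
  rw [sum_sub_distrib, sum_Icc_sum_range_eq, sum_const, Nat.card_Icc] at hsum
  simp only [add_tsub_cancel_right, nsmul_eq_mul] at hsum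
  rw [EH]
  linarith [sum_range_sub_mul_rfun_le hρ N]

theorem var_height_lower_bound (ρ : ℝ) (hρ : 0 < ρ) :
    (∀ N : ℕ, 2 ≤ N →
      pmfP ρ N 1 = 1 / (1 + ρ * ((N : ℝ) - 1)) ∧
      VarH ρ N ≥ (EH ρ N - 1) ^ 2 / (1 + ρ * ((N : ℝ) - 1))) ∧
    (1 ≤ ρ → ∀ᶠ N : ℕ in atTop,
      VarH ρ N ≥ ((N : ℝ) - 5) ^ 2 / (1 + ρ * ((N : ℝ) - 1))) := by
  have hvar : ∀ N : ℕ, 2 ≤ N → VarH ρ N ≥ (EH ρ N - 1) ^ 2 / (1 + ρ * ((N : ℝ) - 1)) :=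
    fun N hN ↦ by
      rw [div_eq_mul_one_div, ← pmfP_one hρ hN]
      exact sq_mul_pmfP_one_le_VarH hρ.le (by omega)
  refine ⟨fun N hN ↦ ⟨pmfP_one hρ hN, hvar N hN⟩, fun hρ1 ↦ ?_⟩
  filter_upwards [eventually_ge_atTop 5] with N hN
  have hN' : (5 : ℝ) ≤ N := by exact_mod_cast hN
  have hE := sub_four_le_EH hρ1 N
  have hsq : ((N : ℝ) - 5) ^ 2 ≤ (EH ρ N - 1) ^ 2 :=
    pow_le_pow_left₀ (by linarith) (by linarith) 2
  have hden : 0 ≤ 1 + ρ * ((N : ℝ) - 1) := by nlinarith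
  exact (div_le_div_of_nonneg_right hsq hden).trans (hvar N (by omega))
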